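/- arXiv:2105.05673 — 4 statements merged into one kernel-verified Lean document; each statement's English description precedes it below -/
import Mathlib

section
/- Let M₁ = (V, I₁) and M₂ = (V, I₂) be matroids, S ∈ I₁ ∩ I₂, and let r be the maximum size of a common independent set. If every path from s to t in the exchange graph G(S) has length at least 2ℓ+2 (in number of arcs), then |S| ≥ (1 - 1/(ℓ+1)) · r. In particular if no (s,t)-path exists then |S| = r. -/
/-
Let `B k` be the elements of `V` reachable from `s` by at most `k` arcs. For `j < ℓ` no arc
leaves `B (2j+1)` towards `t`, so in `M₂` every element of `B (2j+1)` is spanned by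
`S ∩ B (2j+2)`; and since elements of `S` sit at even distance, in `M₁` every element outside
`B (2j+1)` is spanned by `S \ B (2j+1)`. Splitting a maximum common independent set along
`B (2j+1)` gives `r ≤ |S| - |S ∩ B (2j+1)| + |S ∩ B (2j+2)|`, and summing over `j < ℓ`
telescopes to `ℓ r ≤ (ℓ + 1) |S|`.
-/

open Finset

/-- A matroid on a finite ground type `V`, given by its independent sets. -/
structure FinMatroid (V : Type*) [DecidableEq V] [Fintype V] where
  Indep : Finset V → Prop
  indep_empty : Indep ∅
  indep_subset : ∀ ⦃A B : Finset V⦄, Indep B → A ⊆ B → Indep A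
  indep_exchange : ∀ ⦃A B : Finset V⦄, Indep A → Indep B → B.card < A.card →
    ∃ x ∈ A \ B, Indep (insert x B)

open scoped Classical in
/-- The rank of a set: the size of a largest independent subset. -/
noncomputable def FinMatroid.rk {V : Type*} [DecidableEq V] [Fintype V]
    (M : FinMatroid V) (A : Finset V) : ℕ :=
  (A.powerset.filter fun T => M.Indep T).sup Finset.card

variable {V : Type*} [DecidableEq V] [Fintype V]

/-- An arc of the exchange graph G(S); vertices are V ⊕ Bool, where
Sum.inr false = s and Sum.inr true = t. -/
def ExArc (M1 M2 : FinMatroid V) (S : Finset V) : V ⊕ Bool → V ⊕ Bool → Prop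
  | Sum.inr false, Sum.inl b => b ∉ S ∧ M1.Indep (insert b S)
  | Sum.inl b, Sum.inr true => b ∉ S ∧ M2.Indep (insert b S)
  | Sum.inl x, Sum.inl y =>
      (x ∈ S ∧ y ∉ S ∧ M1.Indep (insert y (S.erase x))) ∨
      (x ∉ S ∧ y ∈ S ∧ M2.Indep (insert x (S.erase y)))
  | _, _ => False

namespace FinMatroid

variable (M : FinMatroid V)

theorem card_le_rk {X T : Finset V} (hTX : T ⊆ X) (hT : M.Indep T) : T.card ≤ M.rk X := by
  classical
  exact le_sup (mem_filter.2 ⟨mem_powerset.2 hTX, hT⟩)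

theorem rk_le {X : Finset V} {m : ℕ} (h : ∀ T ⊆ X, M.Indep T → T.card ≤ m) :
    M.rk X ≤ m := by
  classical
  exact Finset.sup_le fun T hT => h T (mem_powerset.1 (mem_filter.1 hT).1) (mem_filter.1 hT).2

theorem exists_indep_superset_subset_union {I J : Finset V} (hI : M.Indep I) (hJ : M.Indep J) :
    ∃ K, M.Indep K ∧ I ⊆ K ∧ K ⊆ I ∪ J ∧ J.card ≤ K.card := by
  induction hn : J.card - I.card generalizing I with
  | zero => exact ⟨I, hI, subset_rfl, subset_union_left, by omega⟩
  | succ n ih =>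
    obtain ⟨x, hx, hxI⟩ := M.indep_exchange hJ hI (by omega)
    obtain ⟨hxJ, hxI'⟩ := mem_sdiff.1 hx
    obtain ⟨K, hK, hIK, hKIJ, hcard⟩ := ih hxI (by rw [card_insert_of_notMem hxI']; omega)
    refine ⟨K, hK, (subset_insert x I).trans hIK, ?_, hcard⟩
    rwa [insert_union, insert_eq_of_mem (mem_union_right I hxJ)] at hKIJ

theorem rk_le_card_of_forall_not_indep {S W X : Finset V} (hS : M.Indep S) (hWS : W ⊆ S)
    (hSX : S ∩ X ⊆ W) (hadd : ∀ b ∈ X \ S, ¬ M.Indep (insert b S))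
    (hexch : ∀ b ∈ X \ S, ∀ a ∈ S \ W, ¬ M.Indep (insert b (S.erase a))) :
    M.rk X ≤ W.card := by
  refine M.rk_le fun T hTX hT => not_lt.1 fun hlt => ?_
  obtain ⟨b, hb, hbW⟩ := M.indep_exchange hT (M.indep_subset hS hWS) hlt
  obtain ⟨hbT, hbW'⟩ := mem_sdiff.1 hb
  have hbS : b ∉ S := fun hbS => hbW' (hSX (mem_inter.2 ⟨hbS, hTX hbT⟩))
  have hbXS : b ∈ X \ S := mem_sdiff.2 ⟨hTX hbT, hbS⟩
  -- augment `insert b W` from `S`: the result misses at most one element of `S`, outside `W`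
  obtain ⟨K, hK, hWK, hKS, hcard⟩ := M.exists_indep_superset_subset_union hbW hS
  rw [insert_union, union_eq_right.2 hWS] at hKS
  by_cases hSK : S ⊆ K
  · exact hadd b hbXS (M.indep_subset hK (insert_subset (hWK (mem_insert_self b W)) hSK))
  obtain ⟨a, haS, haK⟩ := not_subset.1 hSK
  have haW : a ∉ W := fun haW => haK (hWK (mem_insert_of_mem haW))
  have hKa : K ⊆ insert b (S.erase a) := fun y hy => by
    rcases mem_insert.1 (hKS hy) with rfl | hyS
    · exact mem_insert_self y _
    · exact mem_insert_of_mem (mem_erase.2 ⟨fun h => haK (h ▸ hy), hyS⟩)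
  have hKeq : K = insert b (S.erase a) := eq_of_subset_of_card_le hKa <| by
    rw [card_insert_of_notMem (fun h => hbS (mem_of_mem_erase h)), card_erase_add_one haS]
    exact hcard
  exact hexch b hbXS a (mem_sdiff.2 ⟨haS, haW⟩) (hKeq ▸ hK)

end FinMatroid

theorem FinMatroid.card_le_rk_compl_add_rk {M1 M2 : FinMatroid V} {T : Finset V}
    (hT1 : M1.Indep T) (hT2 : M2.Indep T) (X : Finset V) :
    T.card ≤ M1.rk Xᶜ + M2.rk X := by
  rw [← card_sdiff_add_card_inter T X]
  exact add_le_add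
    (M1.card_le_rk (fun x hx => mem_compl.2 (mem_sdiff.1 hx).2) (M1.indep_subset hT1 sdiff_subset))
    (M2.card_le_rk inter_subset_right (M2.indep_subset hT2 inter_subset_left))

inductive ExReach (M1 M2 : FinMatroid V) (S : Finset V) : ℕ → V ⊕ Bool → Prop
  | source : ExReach M1 M2 S 0 (Sum.inr false)
  | step {n : ℕ} {u v : V ⊕ Bool} :
      ExReach M1 M2 S n u → ExArc M1 M2 S u v → ExReach M1 M2 S (n + 1) v

namespace ExReach

variable {M1 M2 : FinMatroid V} {S : Finset V}

theorem exists_walk {n : ℕ} {v : V ⊕ Bool} (h : ExReach M1 M2 S n v) :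
    ∃ p : ℕ → V ⊕ Bool, p 0 = Sum.inr false ∧ p n = v ∧
      ∀ i < n, ExArc M1 M2 S (p i) (p (i + 1)) := by
  induction h with
  | source => exact ⟨fun _ => Sum.inr false, rfl, rfl, fun i hi => absurd hi i.not_lt_zero⟩
  | @step n u v _ huv ih =>
    obtain ⟨p, hp0, hpn, hp⟩ := ih
    refine ⟨Function.update p (n + 1) v, by simp [hp0], by simp, fun i hi => ?_⟩
    rcases Nat.lt_succ_iff_lt_or_eq.1 hi with hi | rfl
    · rw [Function.update_of_ne (by omega), Function.update_of_ne (by omega)]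
      exact hp i hi
    · simpa [Function.update_of_ne (by omega : i ≠ i + 1), hpn] using huv

end ExReach

def ExEvenSide (S : Finset V) : V ⊕ Bool → Prop
  | Sum.inl x => x ∈ S
  | Sum.inr _ => True

theorem ExArc.exEvenSide_iff {M1 M2 : FinMatroid V} {S : Finset V} {u v : V ⊕ Bool}
    (h : ExArc M1 M2 S u v) : ExEvenSide S v ↔ ¬ ExEvenSide S u := by
  rcases u with x | _ | _ <;> rcases v with y | _ | _ <;>
    simp [ExArc, ExEvenSide] at h ⊢ <;> tauto

theorem ExReach.even_iff {M1 M2 : FinMatroid V} {S : Finset V} {n : ℕ} {v : V ⊕ Bool}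
    (h : ExReach M1 M2 S n v) : Even n ↔ ExEvenSide S v := by
  induction h with
  | source => simp [ExEvenSide]
  | step _ huv ih => rw [Nat.even_add_one, ih, huv.exEvenSide_iff]

open scoped Classical in
noncomputable def exBall (M1 M2 : FinMatroid V) (S : Finset V) (k : ℕ) : Finset V :=
  univ.filter fun x => ∃ n ≤ k, ExReach M1 M2 S n (Sum.inl x)

section exBall

variable {M1 M2 : FinMatroid V} {S : Finset V}

@[simp]
theorem mem_exBall {k : ℕ} {x : V} :
    x ∈ exBall M1 M2 S k ↔ ∃ n ≤ k, ExReach M1 M2 S n (Sum.inl x) := by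
  simp [exBall]

theorem exBall_mono {k k' : ℕ} (hk : k ≤ k') : exBall M1 M2 S k ⊆ exBall M1 M2 S k' := by
  intro x hx
  obtain ⟨n, hn, h⟩ := mem_exBall.1 hx
  exact mem_exBall.2 ⟨n, hn.trans hk, h⟩

theorem rk_exBall_le (hS2 : M2.Indep S) {k : ℕ}
    (ht : ∀ n ≤ k + 1, ¬ ExReach M1 M2 S n (Sum.inr true)) :
    M2.rk (exBall M1 M2 S k) ≤ (S ∩ exBall M1 M2 S (k + 1)).card := by
  refine M2.rk_le_card_of_forall_not_indep hS2 inter_subset_left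
    (inter_subset_inter_left (exBall_mono k.le_succ)) ?_ ?_
  · intro b hb hbt
    obtain ⟨hbB, hbS⟩ := mem_sdiff.1 hb
    obtain ⟨n, hn, h⟩ := mem_exBall.1 hbB
    exact ht (n + 1) (by omega) (h.step ⟨hbS, hbt⟩)
  · intro b hb a ha hba
    obtain ⟨hbB, hbS⟩ := mem_sdiff.1 hb
    obtain ⟨haS, haB⟩ := mem_sdiff.1 ha
    obtain ⟨n, hn, h⟩ := mem_exBall.1 hbB
    have hreach : ExReach M1 M2 S (n + 1) (Sum.inl a) := h.step (Or.inr ⟨hbS, haS, hba⟩)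
    exact haB (mem_inter.2 ⟨haS, mem_exBall.2 ⟨n + 1, by omega, hreach⟩⟩)

theorem rk_compl_exBall_le (hS1 : M1.Indep S) (j : ℕ) :
    M1.rk (exBall M1 M2 S (2 * j + 1))ᶜ ≤ (S \ exBall M1 M2 S (2 * j + 1)).card := by
  refine M1.rk_le_card_of_forall_not_indep hS1 sdiff_subset
    (fun x hx => mem_sdiff.2 ⟨(mem_inter.1 hx).1, mem_compl.1 (mem_inter.1 hx).2⟩) ?_ ?_
  · intro b hb hsb
    obtain ⟨hbB, hbS⟩ := mem_sdiff.1 hb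
    exact mem_compl.1 hbB (mem_exBall.2 ⟨1, by omega, ExReach.source.step ⟨hbS, hsb⟩⟩)
  · intro b hb a ha hab
    obtain ⟨hbB, hbS⟩ := mem_sdiff.1 hb
    obtain ⟨haS, haW⟩ := mem_sdiff.1 ha
    have haB : a ∈ exBall M1 M2 S (2 * j + 1) := by
      by_contra haB
      exact haW (mem_sdiff.2 ⟨haS, haB⟩)
    obtain ⟨n, hn, h⟩ := mem_exBall.1 haB
    -- elements of `S` are reached by walks of even length, so `n ≤ 2 * j`
    obtain ⟨m, rfl⟩ : Even n := h.even_iff.2 haS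
    have hreach : ExReach M1 M2 S (m + m + 1) (Sum.inl b) := h.step (Or.inl ⟨haS, hbS, hab⟩)
    exact mem_compl.1 hbB (mem_exBall.2 ⟨m + m + 1, by omega, hreach⟩)

theorem card_add_card_inter_exBall_le (hS1 : M1.Indep S) (hS2 : M2.Indep S) {T : Finset V}
    (hT1 : M1.Indep T) (hT2 : M2.Indep T) {j : ℕ}
    (ht : ∀ n ≤ 2 * j + 2, ¬ ExReach M1 M2 S n (Sum.inr true)) :
    T.card + (S ∩ exBall M1 M2 S (2 * j)).card ≤
      S.card + (S ∩ exBall M1 M2 S (2 * (j + 1))).card := by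
  rw [show 2 * (j + 1) = 2 * j + 1 + 1 by ring]
  have hdual := FinMatroid.card_le_rk_compl_add_rk hT1 hT2 (exBall M1 M2 S (2 * j + 1))
  have h1 := rk_compl_exBall_le (M2 := M2) hS1 j
  have h2 := rk_exBall_le (M1 := M1) hS2 ht
  have hmono : (S ∩ exBall M1 M2 S (2 * j)).card ≤ (S ∩ exBall M1 M2 S (2 * j + 1)).card :=
    card_le_card (inter_subset_inter_left (exBall_mono (by omega)))
  have hsplit := card_sdiff_add_card_inter S (exBall M1 M2 S (2 * j + 1))
  omega

end exBall

theorem mul_add_le_mul_add_of_forall_add_le_add {a b ℓ : ℕ} {f : ℕ → ℕ}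
    (h : ∀ j < ℓ, a + f j ≤ b + f (j + 1)) : ℓ * a + f 0 ≤ ℓ * b + f ℓ := by
  induction ℓ with
  | zero => simp
  | succ ℓ ih =>
    have := ih fun j hj => h j (by omega)
    have := h ℓ (by omega)
    rw [Nat.succ_mul, Nat.succ_mul]
    omega

theorem cunningham_distance_lemma_general (M1 M2 : FinMatroid V) (S : Finset V) (r ℓ : ℕ)
    (hS1 : M1.Indep S) (hS2 : M2.Indep S)
    (hmax : ∃ T : Finset V, M1.Indep T ∧ M2.Indep T ∧ T.card = r)
    (hlen : ∀ (n : ℕ) (p : ℕ → V ⊕ Bool), p 0 = Sum.inr false → p n = Sum.inr true →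
      (∀ i < n, ExArc M1 M2 S (p i) (p (i+1))) → 2 * ℓ + 2 ≤ n) :
    (1 - 1 / (ℓ + 1 : ℚ)) * r ≤ (S.card : ℚ) := by
  obtain ⟨T, hT1, hT2, rfl⟩ := hmax
  have ht : ∀ n < 2 * ℓ + 2, ¬ ExReach M1 M2 S n (Sum.inr true) := fun n hn h => by
    obtain ⟨p, hp0, hpn, hp⟩ := h.exists_walk
    exact absurd (hlen n p hp0 hpn hp) (by omega)
  have hsum := mul_add_le_mul_add_of_forall_add_le_add (ℓ := ℓ)
    (f := fun j => (S ∩ exBall M1 M2 S (2 * j)).card) fun j hj =>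
      card_add_card_inter_exBall_le hS1 hS2 hT1 hT2 fun n hn => ht n (by omega)
  have hball : (S ∩ exBall M1 M2 S (2 * ℓ)).card ≤ S.card := card_le_card inter_subset_left
  have hnat : ℓ * T.card ≤ S.card * (ℓ + 1) := by
    rw [Nat.mul_succ, mul_comm S.card]; omega
  have hℓ : (0 : ℚ) < ℓ + 1 := by positivity
  rw [one_sub_div hℓ.ne', add_sub_cancel_right, div_mul_eq_mul_div, div_le_iff₀ hℓ]
  exact_mod_cast hnat

/-- Cunningham's distance lemma: if every (s,t)-path in the exchange graph G(S)
has length at least 2ℓ+2 arcs, then |S| ≥ (1 - 1/(ℓ+1))·r, where r is the maximum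
size of a common independent set. -/
theorem cunningham_distance_lemma (M1 M2 : FinMatroid V) (S : Finset V) (r ℓ : ℕ)
    (hS1 : M1.Indep S) (hS2 : M2.Indep S)
    (hub : ∀ T : Finset V, M1.Indep T → M2.Indep T → T.card ≤ r)
    (hmax : ∃ T : Finset V, M1.Indep T ∧ M2.Indep T ∧ T.card = r)
    (hlen : ∀ (n : ℕ) (p : ℕ → V ⊕ Bool), p 0 = Sum.inr false → p n = Sum.inr true →
      (∀ i < n, ExArc M1 M2 S (p i) (p (i+1))) → 2 * ℓ + 2 ≤ n) :
    (1 - 1 / (ℓ + 1 : ℚ)) * r ≤ (S.card : ℚ) :=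
  cunningham_distance_lemma_general M1 M2 S r ℓ hS1 hS2 hmax hlen
end

section
/- Let M = (V, I) be a matroid with rank function rk, and let T ⊆ V and R ⊆ T. Suppose rk(T \ R) = rk(T) - |R|. Then for every X ⊆ T, if X \ R ∈ I then X ∈ I. -/
open Finset

variable {V : Type*} [DecidableEq V] [Fintype V]

open scoped Classical

lemma FinMatroid.card_le_rk_s11 (M : FinMatroid V) {A I : Finset V}
    (hIA : I ⊆ A) (hI : M.Indep I) : I.card ≤ M.rk A := by
  classical
  apply Finset.le_sup (f := Finset.card)
  simp [Finset.mem_filter, Finset.mem_powerset, hIA, hI]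

lemma FinMatroid.exists_basis (M : FinMatroid V) (A : Finset V) :
    ∃ B ⊆ A, M.Indep B ∧ B.card = M.rk A := by
  classical
  have hne : (A.powerset.filter fun T => M.Indep T).Nonempty :=
    ⟨∅, by simp [M.indep_empty]⟩
  obtain ⟨B, hB, hcard⟩ := Finset.exists_mem_eq_sup _ hne Finset.card
  simp only [Finset.mem_filter, Finset.mem_powerset] at hB
  exact ⟨B, hB.1, hB.2, hcard.symm⟩

lemma FinMatroid.exists_basis_superset (M : FinMatroid V) {A I : Finset V}
    (hIA : I ⊆ A) (hI : M.Indep I) :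
    ∃ J, I ⊆ J ∧ J ⊆ A ∧ M.Indep J ∧ J.card = M.rk A := by
  classical
  obtain ⟨n, hn⟩ : ∃ n, n = M.rk A - I.card := ⟨_, rfl⟩
  induction n generalizing I with
  | zero =>
    have hle := M.card_le_rk_s11 hIA hI
    have : I.card = M.rk A := by omega
    exact ⟨I, le_refl _, hIA, hI, this⟩
  | succ n ih =>
    obtain ⟨B, hBA, hBi, hBc⟩ := M.exists_basis A
    have hlt : I.card < B.card := by omega
    obtain ⟨x, hx, hins⟩ := M.indep_exchange hBi hI hlt
    simp only [Finset.mem_sdiff] at hx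
    have hsub : insert x I ⊆ A := Finset.insert_subset (hBA hx.1) hIA
    have hcard : (insert x I).card = I.card + 1 := Finset.card_insert_of_notMem hx.2
    obtain ⟨J, hJ1, hJ2, hJ3, hJ4⟩ := ih hsub hins (by omega)
    exact ⟨J, (Finset.subset_insert _ _).trans hJ1, hJ2, hJ3, hJ4⟩

/-- If R ⊆ T and rk(T \ R) = rk(T) - |R| (R consists of coloops relative to T),
then any X ⊆ T with X \ R independent is itself independent. -/
theorem relative_coloops_indep (M : FinMatroid V) (T R : Finset V)
    (hR : R ⊆ T) (hrk : M.rk (T \ R) + R.card = M.rk T) :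
    ∀ X ⊆ T, M.Indep (X \ R) → M.Indep X := by
  intro X hXT hXR
  -- extend X \ R to a basis B of T \ R
  have hXRsub : X \ R ⊆ T \ R := Finset.sdiff_subset_sdiff hXT (le_refl _)
  obtain ⟨B, hXB, hBTR, hBi, hBc⟩ := M.exists_basis_superset hXRsub hXR
  -- extend B to a basis B' of T
  obtain ⟨B', hBB', hB'T, hB'i, hB'c⟩ :=
    M.exists_basis_superset (hBTR.trans Finset.sdiff_subset) hBi
  -- B' \ R is independent subset of T \ R, so card ≤ rk (T \ R)
  have h1 : (B' \ R).card ≤ M.rk (T \ R) :=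
    M.card_le_rk_s11 (Finset.sdiff_subset_sdiff hB'T (le_refl _))
      (M.indep_subset hB'i Finset.sdiff_subset)
  have h2 : (B' ∩ R).card = B'.card - (B' \ R).card := by
    have := Finset.card_sdiff_add_card_inter B' R
    omega
  have h3 : R.card ≤ (B' ∩ R).card := by omega
  have hRB' : R ⊆ B' := by
    have : B' ∩ R = R :=
      Finset.eq_of_subset_of_card_le Finset.inter_subset_right h3
    intro r hr
    rw [← this] at hr
    exact (Finset.mem_inter.mp hr).1
  -- X ⊆ B'
  have hXB' : X ⊆ B' := by
    intro x hx
    by_cases hxR : x ∈ R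
    · exact hRB' hxR
    · exact hBB' (hXB (Finset.mem_sdiff.mpr ⟨hx, hxR⟩))
  exact M.indep_subset hB'i hXB'
end

section
/- Let M₁ = (V, I₁), M₂ = (V, I₂) be matroids and let S ∈ I₁ ∩ I₂ be a maximal common independent set, i.e., for all b ∈ V \ S, S + b ∉ I₁ or S + b ∉ I₂. Then |S| ≥ r/2, where r is the maximum size of a common independent set. -/
open Finset

lemma key_lemma {V : Type*} [DecidableEq V] [Fintype V] (M : FinMatroid V)
    (S A : Finset V) (hS : M.Indep S) (hA : M.Indep A)
    (h : ∀ x ∈ A, x ∉ S → ¬ M.Indep (insert x S)) : A.card ≤ S.card := by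
  by_contra hc
  push_neg at hc
  obtain ⟨x, hx, hind⟩ := M.indep_exchange hA hS hc
  rw [Finset.mem_sdiff] at hx
  exact h x hx.1 hx.2 hind

variable {V : Type*} [DecidableEq V] [Fintype V]

/-- Greedy 1/2-approximation: a maximal common independent set S (no single element
extends it in both matroids) has size at least r/2, where r is the maximum size of a
common independent set. -/
theorem maximal_common_indep_half (M1 M2 : FinMatroid V) (S : Finset V) (r : ℕ)
    (hS1 : M1.Indep S) (hS2 : M2.Indep S)
    (hmaxl : ∀ b ∈ Finset.univ \ S, ¬ M1.Indep (insert b S) ∨ ¬ M2.Indep (insert b S))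
    (hub : ∀ T : Finset V, M1.Indep T → M2.Indep T → T.card ≤ r)
    (hmax : ∃ T : Finset V, M1.Indep T ∧ M2.Indep T ∧ T.card = r) :
    r ≤ 2 * S.card := by

  classical
  obtain ⟨T, hT1, hT2, hTr⟩ := hmax
  set X := (T \ S).filter (fun b => ¬ M1.Indep (insert b S)) with hX
  set Y := (T \ S) \ X with hY
  have hXsub : X ⊆ T \ S := Finset.filter_subset _ _
  have hA1 : ((T ∩ S) ∪ X).card ≤ S.card := by
    apply key_lemma M1 S _ hS1
    · exact M1.indep_subset hT1 (by
        intro x hx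
        rcases Finset.mem_union.1 hx with h | h
        · exact (Finset.mem_inter.1 h).1
        · exact (Finset.mem_sdiff.1 (hXsub h)).1)
    · intro x hx hxS
      rcases Finset.mem_union.1 hx with h | h
      · exact absurd (Finset.mem_inter.1 h).2 hxS
      · exact (Finset.mem_filter.1 h).2
  have hA2 : ((T ∩ S) ∪ Y).card ≤ S.card := by
    apply key_lemma M2 S _ hS2
    · exact M2.indep_subset hT2 (by
        intro x hx
        rcases Finset.mem_union.1 hx with h | h
        · exact (Finset.mem_inter.1 h).1
        · exact (Finset.mem_sdiff.1 ((Finset.mem_sdiff.1 h).1)).1)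
    · intro x hx hxS
      rcases Finset.mem_union.1 hx with h | h
      · exact absurd (Finset.mem_inter.1 h).2 hxS
      · have hx1 := Finset.mem_sdiff.1 h
        have hxTS := Finset.mem_sdiff.1 hx1.1
        have hI1 : M1.Indep (insert x S) := by
          by_contra hne
          exact hx1.2 (Finset.mem_filter.2 ⟨hx1.1, hne⟩)
        have := hmaxl x (Finset.mem_sdiff.2 ⟨Finset.mem_univ x, hxTS.2⟩)
        tauto
  have hdisj1 : Disjoint (T ∩ S) X := by
    apply Finset.disjoint_left.2
    intro a ha haX
    exact (Finset.mem_sdiff.1 (hXsub haX)).2 (Finset.mem_inter.1 ha).2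
  have hdisj2 : Disjoint (T ∩ S) Y := by
    apply Finset.disjoint_left.2
    intro a ha haY
    exact (Finset.mem_sdiff.1 (Finset.mem_sdiff.1 haY).1).2 (Finset.mem_inter.1 ha).2
  rw [Finset.card_union_of_disjoint hdisj1] at hA1
  rw [Finset.card_union_of_disjoint hdisj2] at hA2
  have hXY : X.card + Y.card = (T \ S).card := by
    have := Finset.card_le_card hXsub
    rw [hY, Finset.card_sdiff_of_subset hXsub]
    omega
  have hTcard : (T \ S).card + (T ∩ S).card = T.card :=
    Finset.card_sdiff_add_card_inter T S
  omega
end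

section
/- Let M₁, M₂ be matroids on V with max common independent set size r, let 0 < ε < 1, and suppose an algorithm maintains a common independent set S and halts when the shortest (s,t)-path in G(S) has length more than 2/ε + 2. Then upon halting, |S| ≥ (1 - ε)·r. (Correctness of the phase-based approximation scheme.) -/
open Finset

variable {V : Type*} [DecidableEq V] [Fintype V]

/-! ### Auxiliary matroid lemmas -/

lemma card_le_of_spanned {M : FinMatroid V} {I C : Finset V} (hI : M.Indep I) (hC : M.Indep C)
    (h : ∀ a ∈ C, a ∈ I ∨ ¬ M.Indep (insert a I)) : C.card ≤ I.card := by
  by_contra h'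
  push_neg at h'
  obtain ⟨x, hx, hxI⟩ := M.indep_exchange hC hI h'
  rw [mem_sdiff] at hx
  rcases h x hx.1 with h1 | h2
  · exact hx.2 h1
  · exact h2 hxI

lemma grow {M : FinMatroid V} {S : Finset V} (hS : M.Indep S) :
    ∀ (n : ℕ) (C : Finset V), M.Indep C → C.card + n = S.card →
      ∃ J, C ⊆ J ∧ J ⊆ C ∪ S ∧ M.Indep J ∧ J.card = S.card := by
  intro n
  induction n with
  | zero =>
    intro C hC h
    exact ⟨C, subset_refl _, subset_union_left, hC, by omega⟩
  | succ n ih =>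
    intro C hC h
    obtain ⟨x, hx, hxC⟩ := M.indep_exchange hS hC (by omega)
    rw [mem_sdiff] at hx
    obtain ⟨J, hCJ, hJsub, hJi, hJc⟩ := ih (insert x C) hxC
      (by rw [card_insert_of_notMem hx.2]; omega)
    refine ⟨J, (subset_insert x C).trans hCJ, hJsub.trans ?_, hJi, hJc⟩
    intro y hy
    simp only [mem_union, mem_insert] at hy ⊢
    rcases hy with (rfl | h) | h
    · exact Or.inr hx.1
    · exact Or.inl h
    · exact Or.inr h

lemma exists_exchange {M : FinMatroid V} {S I : Finset V} {b : V} (hS : M.Indep S)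
    (hb : b ∉ S) (hIS : I ⊆ S) (hne : I ≠ S) (hbI : M.Indep (insert b I)) :
    ∃ x ∈ S, x ∉ I ∧ M.Indep (insert b (S.erase x)) := by
  have hssub : I ⊂ S := lt_of_le_of_ne hIS hne
  have hIcard : I.card < S.card := card_lt_card hssub
  have hbI' : b ∉ I := fun h => hb (hIS h)
  have hcard : (insert b I).card + (S.card - (I.card + 1)) = S.card := by
    rw [card_insert_of_notMem hbI']; omega
  obtain ⟨J, hCJ, hJsub, hJi, hJc⟩ := grow hS _ _ hbI hcard
  have hbJ : b ∈ J := hCJ (mem_insert_self b I)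
  have hJbS : J.erase b ⊆ S := by
    intro y hy
    rw [mem_erase] at hy
    rcases mem_union.1 (hJsub hy.2) with h | h
    · rcases mem_insert.1 h with h | h
      · exact absurd h hy.1
      · exact hIS h
    · exact h
  have hJbc : (J.erase b).card = S.card - 1 := by
    rw [card_erase_of_mem hbJ, hJc]
  have h1 : (S \ J.erase b).card = 1 := by
    rw [card_sdiff_of_subset hJbS, hJbc]
    omega
  obtain ⟨x, hx⟩ := card_eq_one.1 h1
  have hxS : x ∈ S := by
    have : x ∈ S \ J.erase b := hx ▸ mem_singleton_self x
    exact (mem_sdiff.1 this).1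
  have hxJ : x ∉ J.erase b := by
    have : x ∈ S \ J.erase b := hx ▸ mem_singleton_self x
    exact (mem_sdiff.1 this).2
  have heq : J.erase b = S.erase x := by
    apply eq_of_subset_of_card_le
    · intro y hy
      rw [mem_erase]
      refine ⟨?_, hJbS hy⟩
      rintro rfl
      exact hxJ hy
    · rw [card_erase_of_mem hxS, hJbc]
  have hxI : x ∉ I := by
    intro hxI
    apply hxJ
    rw [mem_erase]
    exact ⟨fun h => hbI' (h ▸ hxI), hCJ (mem_insert_of_mem hxI)⟩
  refine ⟨x, hxS, hxI, ?_⟩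
  have hJ : insert b (S.erase x) = J := by
    rw [← heq, insert_erase hbJ]
  rw [hJ]; exact hJi

/-! ### Reachability in the exchange graph -/

def Reach (M1 M2 : FinMatroid V) (S : Finset V) (k : ℕ) (v : V ⊕ Bool) : Prop :=
  ∃ n ≤ k, ∃ p : ℕ → V ⊕ Bool, p 0 = Sum.inr false ∧ p n = v ∧
    ∀ i < n, ExArc M1 M2 S (p i) (p (i+1))

lemma reach_mono {M1 M2 : FinMatroid V} {S : Finset V} {k k' : ℕ} {v : V ⊕ Bool}
    (hkk : k ≤ k') (h : Reach M1 M2 S k v) : Reach M1 M2 S k' v := by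
  obtain ⟨n, hn, p, h0, hv, harc⟩ := h
  exact ⟨n, hn.trans hkk, p, h0, hv, harc⟩

lemma reach_step {M1 M2 : FinMatroid V} {S : Finset V} {k : ℕ} {u v : V ⊕ Bool}
    (h : Reach M1 M2 S k u) (harc : ExArc M1 M2 S u v) : Reach M1 M2 S (k + 1) v := by
  obtain ⟨n, hn, p, h0, hu, hp⟩ := h
  refine ⟨n + 1, by omega, fun i => if i ≤ n then p i else v, ?_, ?_, ?_⟩
  · simp [h0]
  · simp
  · intro i hi
    rcases Nat.lt_or_ge i n with h' | h'
    · simpa [Nat.le_of_lt h', Nat.succ_le_of_lt h'] using hp i h'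
    · have : i = n := by omega
      subst this
      simpa [hu] using harc

lemma reach_start {M1 M2 : FinMatroid V} {S : Finset V} {k : ℕ} :
    Reach M1 M2 S k (Sum.inr false) :=
  ⟨0, Nat.zero_le _, fun _ => Sum.inr false, rfl, rfl, fun i hi => absurd hi (Nat.not_lt_zero i)⟩

/-! ### The level-cut counting step -/

open scoped Classical in
lemma step_bound (M1 M2 : FinMatroid V) (S T : Finset V) (j : ℕ)
    (hS1 : M1.Indep S) (hS2 : M2.Indep S) (hT1 : M1.Indep T) (hT2 : M2.Indep T)
    (hnt : ∀ a : V, a ∉ S → Reach M1 M2 S (2*j+1) (Sum.inl a) → ¬ M2.Indep (insert a S)) :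
    T.card + (S.filter fun a => Reach M1 M2 S (2*j) (Sum.inl a)).card ≤
      S.card + (S.filter fun a => Reach M1 M2 S (2*j+2) (Sum.inl a)).card := by
  set I1 : Finset V := S.filter (fun a => ¬ Reach M1 M2 S (2*j) (Sum.inl a)) with hI1
  set I2 : Finset V := S.filter (fun a => Reach M1 M2 S (2*j+2) (Sum.inl a)) with hI2
  set W : Finset V := Finset.univ.filter
    (fun v => (v ∈ S ∧ ¬ Reach M1 M2 S (2*j) (Sum.inl v)) ∨
      (v ∉ S ∧ ¬ Reach M1 M2 S (2*j+1) (Sum.inl v))) with hW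
  have hb1 : (T ∩ W).card ≤ I1.card := by
    apply card_le_of_spanned (M1.indep_subset hS1 (filter_subset _ _))
      (M1.indep_subset hT1 inter_subset_left)
    intro a ha
    have haW : a ∈ W := (mem_inter.1 ha).2
    rw [hW, mem_filter] at haW
    rcases haW.2 with ⟨haS, hnr⟩ | ⟨haS, hnr⟩
    · exact Or.inl (mem_filter.2 ⟨haS, hnr⟩)
    · right
      intro hind
      by_cases hIS : I1 = S
      · rw [← hI1, hIS] at hind
        have harc : ExArc M1 M2 S (Sum.inr false) (Sum.inl a) := ⟨haS, hind⟩
        exact hnr (reach_mono (by omega) (reach_step (reach_start (k := 0)) harc))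
      · obtain ⟨x, hxS, hxI, hind'⟩ := exists_exchange hS1 haS (filter_subset _ _) hIS hind
        have hxR : Reach M1 M2 S (2*j) (Sum.inl x) := by
          by_contra hc
          exact hxI (mem_filter.2 ⟨hxS, hc⟩)
        have harc : ExArc M1 M2 S (Sum.inl x) (Sum.inl a) := Or.inl ⟨hxS, haS, hind'⟩
        exact hnr (reach_step hxR harc)
  have hb2 : (T \ W).card ≤ I2.card := by
    apply card_le_of_spanned (M2.indep_subset hS2 (filter_subset _ _))
      (M2.indep_subset hT2 sdiff_subset)
    intro a ha
    have haW : a ∉ W := (mem_sdiff.1 ha).2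
    have hP : ¬ ((a ∈ S ∧ ¬ Reach M1 M2 S (2*j) (Sum.inl a)) ∨
        (a ∉ S ∧ ¬ Reach M1 M2 S (2*j+1) (Sum.inl a))) := by
      intro hp
      exact haW (by rw [hW]; exact mem_filter.2 ⟨mem_univ a, hp⟩)
    push_neg at hP
    by_cases haS : a ∈ S
    · exact Or.inl (mem_filter.2 ⟨haS, reach_mono (by omega) (hP.1 haS)⟩)
    · right
      intro hind
      have hR : Reach M1 M2 S (2*j+1) (Sum.inl a) := hP.2 haS
      have hnS : ¬ M2.Indep (insert a S) := hnt a haS hR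
      have hI2ne : I2 ≠ S := by
        intro h
        rw [← hI2, h] at hind
        exact hnS hind
      obtain ⟨y, hyS, hyI, hind'⟩ := exists_exchange hS2 haS (filter_subset _ _) hI2ne hind
      have harc : ExArc M1 M2 S (Sum.inl a) (Sum.inl y) := Or.inr ⟨haS, hyS, hind'⟩
      exact hyI (mem_filter.2 ⟨hyS, reach_mono (by omega) (reach_step hR harc)⟩)
  have hsplit : (T ∩ W).card + (T \ W).card = T.card := card_inter_add_card_sdiff T W
  have hfilt : (S.filter fun a => Reach M1 M2 S (2*j) (Sum.inl a)).card + I1.card = S.card := by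
    rw [hI1]
    exact card_filter_add_card_filter_not _
  omega

/-- Correctness of the phase-based approximation scheme: if every (s,t)-path in the
exchange graph G(S) has length more than 2/ε + 2, then |S| ≥ (1 - ε)·r. -/
theorem approx_scheme_correct (M1 M2 : FinMatroid V) (S : Finset V) (r : ℕ) (ε : ℝ)
    (hε0 : 0 < ε) (hε1 : ε < 1)
    (hS1 : M1.Indep S) (hS2 : M2.Indep S)
    (hub : ∀ T : Finset V, M1.Indep T → M2.Indep T → T.card ≤ r)
    (hmax : ∃ T : Finset V, M1.Indep T ∧ M2.Indep T ∧ T.card = r)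
    (hlen : ∀ (n : ℕ) (p : ℕ → V ⊕ Bool), p 0 = Sum.inr false → p n = Sum.inr true →
      (∀ i < n, ExArc M1 M2 S (p i) (p (i+1))) → 2 / ε + 2 < (n : ℝ)) :
    (1 - ε) * r ≤ (S.card : ℝ) := by
  classical
  obtain ⟨T, hT1, hT2, hTr⟩ := hmax
  set ℓ := ⌊1/ε⌋₊ with hℓdef
  have hεpos : (0:ℝ) < 1/ε := by positivity
  have hℓle : (ℓ : ℝ) ≤ 1/ε := Nat.floor_le (le_of_lt hεpos)
  have hnt : ∀ j, j + 1 ≤ ℓ → ∀ a : V, a ∉ S → Reach M1 M2 S (2*j+1) (Sum.inl a) →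
      ¬ M2.Indep (insert a S) := by
    intro j hj a haS hR hind
    have harc : ExArc M1 M2 S (Sum.inl a) (Sum.inr true) := ⟨haS, hind⟩
    obtain ⟨n, hn, p, h0, hv, hp⟩ := reach_step hR harc
    have hbig := hlen n p h0 hv hp
    have hn' : (n : ℝ) ≤ 2*(j:ℝ) + 2 := by
      have h1 : n ≤ 2*j+2 := hn
      have := (Nat.cast_le (α := ℝ)).2 h1
      push_cast at this
      linarith
    have hj1 : (j:ℝ) + 1 ≤ 1/ε := by
      have : ((j+1 : ℕ) : ℝ) ≤ (ℓ : ℝ) := Nat.cast_le.2 hj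
      push_cast at this
      linarith [this.trans hℓle]
    have h2e : (2:ℝ)/ε = 2 * (1/ε) := by ring
    linarith
  have key : ∀ j, j ≤ ℓ → j * r ≤ j * S.card +
      (S.filter fun a => Reach M1 M2 S (2*j) (Sum.inl a)).card := by
    intro j
    induction j with
    | zero => intro _; simp
    | succ j ih =>
      intro hj
      have hstep := step_bound M1 M2 S T j hS1 hS2 hT1 hT2 (hnt j hj)
      have hih := ih (by omega)
      rw [hTr] at hstep
      have e3 : 2*(j+1) = 2*j+2 := by ring
      rw [e3]
      have e1 : (j+1) * r = j * r + r := by ring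
      have e2 : (j+1) * S.card = j * S.card + S.card := by ring
      rw [e1, e2]
      omega
  have hfin : ℓ * r ≤ (ℓ + 1) * S.card := by
    have h1 := key ℓ le_rfl
    have h2 : (S.filter fun a => Reach M1 M2 S (2*ℓ) (Sum.inl a)).card ≤ S.card :=
      card_filter_le _ _
    have e : (ℓ+1) * S.card = ℓ * S.card + S.card := by ring
    omega
  have hcast : (ℓ:ℝ) * r ≤ ((ℓ:ℝ) + 1) * S.card := by
    have := (Nat.cast_le (α := ℝ)).2 hfin
    push_cast at this
    linarith
  have hεℓ : 1 ≤ ε * ((ℓ:ℝ) + 1) := by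
    have h := Nat.lt_floor_add_one (1/ε)
    have h2 : (1:ℝ)/ε < (ℓ:ℝ) + 1 := by exact_mod_cast h
    have h3 : (1:ℝ) < ((ℓ:ℝ) + 1) * ε := (div_lt_iff₀ hε0).1 h2
    linarith
  have h3 : (1-ε) * ((ℓ:ℝ)+1) ≤ (ℓ:ℝ) := by nlinarith
  have h4 : (1-ε) * ((ℓ:ℝ)+1) * r ≤ (ℓ:ℝ) * r :=
    mul_le_mul_of_nonneg_right h3 (Nat.cast_nonneg r)
  have hpos : (0:ℝ) < (ℓ:ℝ) + 1 := by positivity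
  nlinarith [h4, hcast, hpos]
end
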